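/- arXiv:1709.08696 — 3 statements merged into one kernel-verified Lean document; each statement's English description precedes it below -/
import Mathlib

section
/- Let A = (Q, Σ, Δ, q0, F) be an NFA over a partially ordered alphabet Σ. If 𝓛(A) does not have polynomial antichain growth, then 𝓛(A) contains an antichain with exponential growth (and hence has exponential antichain growth). -/
/-!
Pass to the subset automaton, a DFA, and look for a reachable, co-accepting state `s` with two
incomparable loops `u`, `v`.

If there is one, reached by `x` and accepting `y`, then `U = uv` and `V = vu` are incomparable
loops of the same length. Coding a bit string `b₁ ⋯ bⱼ` as `U B₁ U B₂ ⋯ U Bⱼ V` with `Bᵢ ∈ {U, V}`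
is prefix-free, so two distinct codewords first differ where one has `U` and the other `V`; hence
the words `x · code · y` form an antichain with `2 ^ j` words of length `O(j)`.

If there is none, an antichain `A` of words of length `n` accepted from a reachable `s` splits by
first letter. At most one letter both starts a word of `A` and leads to a state from which `s` is
reachable again; every other letter strictly shrinks the set of reachable states. Induction on `n`
gives `|A| ≤ (n |Σ| + 1) ^ m` with `m` the number of states reachable from `s`.
-/

open Filter
open scoped ENNReal

/-- The lexicographic partial order on words induced by a strict order `r` on letters:
`ε R w` for all `w`, and `(x :: w) R (y :: w')` iff `r x y`, or `x = y` and `w R w'`. -/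
inductive LexR {α : Type*} (r : α → α → Prop) : List α → List α → Prop
  | nil (w : List α) : LexR r [] w
  | head {x y : α} (w w' : List α) (h : r x y) : LexR r (x :: w) (y :: w')
  | cons (x : α) {w w' : List α} (h : LexR r w w') : LexR r (x :: w) (x :: w')

/-- Two words are comparable (`u ∼ v`) if `u R v` or `v R u`. -/
def LexComp {α : Type*} (r : α → α → Prop) (u v : List α) : Prop :=
  LexR r u v ∨ LexR r v u

/-- A language is an antichain if any two distinct words of it are incomparable. -/
def IsAntichainLang {α : Type*} (r : α → α → Prop) (L : Set (List α)) : Prop :=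
  ∀ u ∈ L, ∀ v ∈ L, u ≠ v → ¬ LexComp r u v

/-- A language is a quasiantichain if any two words of it are incomparable or one is a
prefix of the other. -/
def IsQuasiantichainLang {α : Type*} (r : α → α → Prop) (L : Set (List α)) : Prop :=
  ∀ u ∈ L, ∀ v ∈ L, u <+: v ∨ v <+: u ∨ ¬ LexComp r u v

/-- A language is a chain if any two words of it are comparable. -/
def IsChainLang {α : Type*} (r : α → α → Prop) (L : Set (List α)) : Prop :=
  ∀ u ∈ L, ∀ v ∈ L, LexComp r u v

/-- `|L|_{=n}`: the number of words of length `n` in `L`. -/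
noncomputable def countLen {α : Type*} (L : Set (List α)) (n : ℕ) : ℕ :=
  {w ∈ L | w.length = n}.ncard

/-- `L` has exponential growth of order `ε` if `limsup |L|_{=n} / 2^(εn) > 0`. -/
def ExpGrowthOrder {α : Type*} (L : Set (List α)) (ε : ℝ) : Prop :=
  0 < Filter.limsup (fun n : ℕ => (countLen L n : ℝ≥0∞) / (2 : ℝ≥0∞) ^ (ε * n)) Filter.atTop

/-- `L` has exponential growth if it has exponential growth of some order `ε > 0`. -/
def ExpGrowth {α : Type*} (L : Set (List α)) : Prop :=
  ∃ ε : ℝ, 0 < ε ∧ ExpGrowthOrder L ε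

/-- `L` has polynomial growth if `limsup |L|_{=n} / n^k < ∞` for some `k`. -/
def PolyGrowth {α : Type*} (L : Set (List α)) : Prop :=
  ∃ k : ℕ, Filter.limsup (fun n : ℕ => (countLen L n : ℝ≥0∞) / (n : ℝ≥0∞) ^ k) Filter.atTop < ⊤

/-- `L` is an antichain family if the set of words of length `n` in `L` is an antichain
for every `n`. -/
def AntichainFamily {α : Type*} (r : α → α → Prop) (L : Set (List α)) : Prop :=
  ∀ n : ℕ, IsAntichainLang r {w ∈ L | w.length = n}

/-- `L` has exponential antichain growth if some subset of `L` is an antichain family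
with exponential growth. -/
def ExpAntichainGrowth {α : Type*} (r : α → α → Prop) (L : Set (List α)) : Prop :=
  ∃ L' ⊆ L, AntichainFamily r L' ∧ ExpGrowth L'

/-- `L` has polynomial antichain growth if every antichain family contained in `L`
has polynomial growth. -/
def PolyAntichainGrowth {α : Type*} (r : α → α → Prop) (L : Set (List α)) : Prop :=
  ∀ L' ⊆ L, AntichainFamily r L' → PolyGrowth L'

/-- The Kleene star of a language: all finite concatenations of words of `L`. -/
def KStarLang {α : Type*} (L : Set (List α)) : Set (List α) :=
  {w | ∃ S : List (List α), (∀ u ∈ S, u ∈ L) ∧ w = S.flatten}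

theorem IsAntichainLang.antichainFamily {α : Type*} {r : α → α → Prop} {L : Set (List α)}
    (h : IsAntichainLang r L) : AntichainFamily r L :=
  fun _ u hu v hv => h u hu.1 v hv.1

section Lex

variable {α : Type*} {r : α → α → Prop}

theorem lexComp_refl (w : List α) : LexComp r w w := by
  induction w with
  | nil => exact .inl (.nil _)
  | cons a w ih => exact ih.imp (.cons a) (.cons a)

theorem lexComp_comm {u v : List α} : LexComp r u v ↔ LexComp r v u := or_comm

theorem LexComp.cons (a : α) {u v : List α} (h : LexComp r u v) :
    LexComp r (a :: u) (a :: v) :=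
  h.imp (.cons a) (.cons a)

theorem lexR_cons_cons_iff {a b : α} {u v : List α} :
    LexR r (a :: u) (b :: v) ↔ r a b ∨ a = b ∧ LexR r u v := by
  constructor
  · rintro (_ | ⟨_, _, h⟩ | ⟨_, h⟩)
    · exact .inl h
    · exact .inr ⟨rfl, h⟩
  · rintro (h | ⟨rfl, h⟩)
    · exact .head _ _ h
    · exact .cons a h

theorem lexComp_cons_cons_iff_of_ne {a b : α} (hab : a ≠ b) (u v : List α) :
    LexComp r (a :: u) (b :: v) ↔ r a b ∨ r b a := by
  simp [LexComp, lexR_cons_cons_iff, hab, hab.symm]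

theorem lexComp_cons_cons_self_iff [Std.Irrefl r] (a : α) {u v : List α} :
    LexComp r (a :: u) (a :: v) ↔ LexComp r u v := by
  simp [LexComp, lexR_cons_cons_iff, Std.Irrefl.irrefl a]

theorem lexComp_append_left_iff [Std.Irrefl r] (p : List α) {u v : List α} :
    LexComp r (p ++ u) (p ++ v) ↔ LexComp r u v := by
  induction p with
  | nil => rfl
  | cons a p ih => rw [List.cons_append, List.cons_append, lexComp_cons_cons_self_iff, ih]

theorem not_lexComp_append [Std.Irrefl r] {u v : List α} (h : ¬ LexComp r u v)
    (s t : List α) : ¬ LexComp r (u ++ s) (v ++ t) := by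
  induction u generalizing v with
  | nil => exact absurd (.inl (.nil v)) h
  | cons a u ih =>
    cases v with
    | nil => exact absurd (.inr (.nil _)) h
    | cons b v =>
      by_cases hab : a = b
      · subst hab
        rw [List.cons_append, List.cons_append, lexComp_cons_cons_self_iff]
        exact ih fun huv => h (huv.cons a)
      · rwa [List.cons_append, List.cons_append, lexComp_cons_cons_iff_of_ne hab,
          ← lexComp_cons_cons_iff_of_ne hab u v]

end Lex

section BlockWord

variable {α : Type*}

def blockWord (u v : List α) : List Bool → List α
  | [] => v
  | b :: l => u ++ (cond b u v ++ blockWord u v l)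

theorem length_blockWord {u v : List α} (h : u.length = v.length) (l : List Bool) :
    (blockWord u v l).length = v.length + 2 * v.length * l.length := by
  induction l with
  | nil => simp [blockWord]
  | cons b l ih => cases b <;> simp [blockWord, ih, h] <;> ring

theorem not_lexComp_blockWord {r : α → α → Prop} [Std.Irrefl r] {u v : List α}
    (huv : ¬ LexComp r u v) {l l' : List Bool} (hl : l ≠ l') (s t : List α) :
    ¬ LexComp r (blockWord u v l ++ s) (blockWord u v l' ++ t) := by
  induction l generalizing l' with
  | nil =>
    cases l' with
    | nil => exact absurd rfl hl
    | cons b' l' =>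
      simpa only [blockWord, List.append_assoc] using
        not_lexComp_append (mt lexComp_comm.1 huv) s _
  | cons b l ih =>
    cases l' with
    | nil =>
      simpa only [blockWord, List.append_assoc] using not_lexComp_append huv _ t
    | cons b' l' =>
      simp only [blockWord, List.append_assoc, lexComp_append_left_iff]
      by_cases hb : b = b'
      · subst hb
        rw [lexComp_append_left_iff]
        exact ih (fun h => hl (h ▸ rfl))
      · have hbb : ¬ LexComp r (cond b u v) (cond b' u v) := by
          cases b <;> cases b' <;> simp_all [lexComp_comm]
        exact not_lexComp_append hbb _ _

end BlockWord

section Growth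

variable {α : Type*}

theorem ncard_setOf_length_eq [Fintype α] (n : ℕ) :
    {l : List α | l.length = n}.ncard = Fintype.card α ^ n := by
  rw [← Nat.card_coe_set_eq, ← card_vector n, ← Nat.card_eq_fintype_card]
  rfl

theorem expGrowth_of_pow_two_le {L : Set (List α)} {a b : ℕ} (hb : 0 < b)
    (h : ∀ j, 2 ^ j ≤ countLen L (a + b * j)) : ExpGrowth L := by
  have hab : (0 : ℝ) < a + b := by positivity
  refine ⟨(a + b : ℝ)⁻¹, inv_pos.2 hab, ?_⟩
  suffices ∃ᶠ n : ℕ in atTop, 1 ≤ (countLen L n : ℝ≥0∞) / 2 ^ ((a + b : ℝ)⁻¹ * n) from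
    zero_lt_one.trans_le (le_limsup_of_frequently_le' this)
  refine frequently_atTop.2 fun N => ⟨a + b * (N + 1), by nlinarith, ?_⟩
  -- `(a + b j) / (a + b) ≤ j` as soon as `j ≥ 1`
  have hexp : (a + b : ℝ)⁻¹ * ((a + b * (N + 1) : ℕ) : ℝ) ≤ ((N + 1 : ℕ) : ℝ) := by
    rw [inv_mul_le_iff₀ hab]
    push_cast
    nlinarith [(Nat.cast_nonneg a : (0 : ℝ) ≤ a), (Nat.cast_nonneg N : (0 : ℝ) ≤ N)]
  rw [ENNReal.le_div_iff_mul_le (.inl (by positivity)) (.inl (by simp)), one_mul]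
  calc (2 : ℝ≥0∞) ^ ((a + b : ℝ)⁻¹ * ((a + b * (N + 1) : ℕ) : ℝ))
      ≤ 2 ^ ((N + 1 : ℕ) : ℝ) := ENNReal.rpow_le_rpow_of_exponent_le one_le_two hexp
    _ = ((2 ^ (N + 1) : ℕ) : ℝ≥0∞) := by rw [ENNReal.rpow_natCast]; push_cast; rfl
    _ ≤ countLen L (a + b * (N + 1)) := by exact_mod_cast h (N + 1)

theorem countLen_range_of_length_eq {β : Type*} [Fintype β] {z : List β → List α}
    (hz : z.Injective) {a b : ℕ} (hb : 0 < b) (hlen : ∀ l, (z l).length = a + b * l.length)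
    (j : ℕ) : countLen (Set.range z) (a + b * j) = Fintype.card β ^ j := by
  have hfiber : {w ∈ Set.range z | w.length = a + b * j} = z '' {l | l.length = j} := by
    ext w
    simp only [Set.mem_image, Set.mem_range]
    constructor
    · rintro ⟨⟨l, rfl⟩, hl⟩
      rw [hlen] at hl
      exact ⟨l, Nat.eq_of_mul_eq_mul_left hb (Nat.add_left_cancel hl), rfl⟩
    · rintro ⟨l, hl, rfl⟩
      exact ⟨⟨l, rfl⟩, by rw [hlen, hl]⟩
  rw [countLen, hfiber, Set.ncard_image_of_injective _ hz, ncard_setOf_length_eq]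

theorem polyGrowth_of_countLen_le {L : Set (List α)} {C k : ℕ}
    (h : ∀ n, countLen L n ≤ (n * C + 1) ^ k) : PolyGrowth L := by
  refine ⟨k, lt_of_le_of_lt (b := ((C + 1 : ℕ) : ℝ≥0∞) ^ k)
    (limsup_le_of_le (by isBoundedDefault) ?_) (ENNReal.pow_lt_top (ENNReal.natCast_lt_top _))⟩
  filter_upwards [eventually_ge_atTop 1] with n hn
  have hle : countLen L n ≤ (C + 1) ^ k * n ^ k := by
    rw [← mul_pow]
    exact (h n).trans (Nat.pow_le_pow_left (by nlinarith) k)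
  rw [ENNReal.div_le_iff_le_mul (.inl (by positivity)) (.inl (by simp))]
  exact_mod_cast hle

theorem sum_le_of_card_le_one {ι : Type*} [Fintype ι] {f : ι → ℕ} {R : Finset ι}
    (hR : R.card ≤ 1) {X Y : ℕ} (hX : ∀ i ∈ R, f i ≤ X) (hY : ∀ i ∉ R, f i ≤ Y) :
    ∑ i, f i ≤ X + Fintype.card ι * Y := by
  classical
  calc ∑ i, f i ≤ ∑ i, ((if i ∈ R then X else 0) + Y) := by
        refine Finset.sum_le_sum fun i _ => ?_
        by_cases hi : i ∈ R
        · simpa [hi] using (hX i hi).trans (Nat.le_add_right X Y)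
        · simpa [hi] using hY i hi
    _ = R.card * X + Fintype.card ι * Y := by
        simp [Finset.sum_add_distrib, Finset.sum_ite_mem]
    _ ≤ X + Fintype.card ι * Y := by
        gcongr
        exact mul_le_of_le_one_left (Nat.zero_le _) hR

theorem ncard_le_sum_ncard_cons_preimage {α : Type*} [Fintype α] {A : Set (List α)}
    (hA : [] ∉ A) : A.ncard ≤ ∑ c, ((c :: ·) ⁻¹' A).ncard := by
  have hunion : A = ⋃ c, (c :: ·) '' ((c :: ·) ⁻¹' A) := by
    ext (_ | ⟨c, w⟩)
    · simpa using hA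
    · simp
  calc A.ncard ≤ ∑ c, ((c :: ·) '' ((c :: ·) ⁻¹' A)).ncard := by
        conv_lhs => rw [hunion]
        exact Set.ncard_iUnion_le_of_fintype _
    _ = ∑ c, ((c :: ·) ⁻¹' A).ncard := by
        simp only [Set.ncard_image_of_injective _ List.cons_injective]

end Growth

namespace DFA

variable {α σ : Type*} (M : DFA α σ)

def reachableFrom (s : σ) : Set σ := Set.range (M.evalFrom s)

theorem self_mem_reachableFrom (s : σ) : s ∈ M.reachableFrom s := ⟨[], rfl⟩

theorem reachableFrom_step_subset (s : σ) (a : α) :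
    M.reachableFrom (M.step s a) ⊆ M.reachableFrom s := by
  rintro t ⟨w, rfl⟩
  exact ⟨a :: w, rfl⟩

theorem evalFrom_blockWord {s : σ} {u v : List α} (hu : M.evalFrom s u = s)
    (hv : M.evalFrom s v = s) (l : List Bool) : M.evalFrom s (blockWord u v l) = s := by
  induction l with
  | nil => exact hv
  | cons b l ih => cases b <;> simp [blockWord, evalFrom_of_append, hu, hv, ih]

variable [Preorder α]

def HasIncomparableLoops : Prop :=
  ∃ x u v y : List α, ¬ LexComp (· < ·) u v ∧ M.evalFrom (M.eval x) u = M.eval x ∧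
    M.evalFrom (M.eval x) v = M.eval x ∧ y ∈ M.acceptsFrom (M.eval x)

theorem eq_of_cons_mem_antichain_of_mem_reachableFrom (hM : ¬ M.HasIncomparableLoops)
    {x : List α} {A : Set (List α)} (hA : A ⊆ M.acceptsFrom (M.eval x))
    (hanti : IsAntichainLang (· < ·) A) {c d : α} {wc wd : List α}
    (hwc : c :: wc ∈ A) (hwd : d :: wd ∈ A)
    (hc : M.eval x ∈ M.reachableFrom (M.step (M.eval x) c))
    (hd : M.eval x ∈ M.reachableFrom (M.step (M.eval x) d)) : c = d := by
  by_contra hcd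
  obtain ⟨xc, hxc⟩ := hc
  obtain ⟨xd, hxd⟩ := hd
  have hinc : ¬ (c < d ∨ d < c) := by
    rw [← lexComp_cons_cons_iff_of_ne hcd wc wd]
    exact hanti _ hwc _ hwd (by simp [hcd])
  refine hM ⟨x, c :: xc, d :: xd, c :: wc, ?_, hxc, hxd, hA hwc⟩
  rwa [lexComp_cons_cons_iff_of_ne hcd]

theorem ncard_antichain_le [Fintype α] [Finite σ] (hM : ¬ M.HasIncomparableLoops) (n : ℕ)
    (x : List α) {A : Set (List α)} (hA : A ⊆ M.acceptsFrom (M.eval x))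
    (hanti : IsAntichainLang (· < ·) A) (hlen : ∀ w ∈ A, w.length = n) :
    A.ncard ≤ (n * Fintype.card α + 1) ^ (M.reachableFrom (M.eval x)).ncard := by
  classical
  induction n generalizing x A with
  | zero =>
    have hA1 : A.ncard ≤ 1 :=
      (Set.ncard_le_ncard (t := {[]}) fun w hw => List.length_eq_zero_iff.1 (hlen w hw)).trans
        (Set.ncard_singleton _).le
    simpa using hA1
  | succ n ih =>
    set s := M.eval x
    set K := Fintype.card α
    set N := n * K + 1 with hN
    have htail (c : α) : ((c :: ·) ⁻¹' A).ncard ≤ N ^ (M.reachableFrom (M.step s c)).ncard := by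
      rw [← eval_append_singleton]
      refine ih (x ++ [c]) ?_ ?_ ?_
      · rw [eval_append_singleton]
        exact fun w hw => hA hw
      · intro u hu v hv huv hcomp
        exact hanti _ hu _ hv (by simpa using huv) (hcomp.cons c)
      · intro w hw
        simpa using hlen _ hw
    let R : Finset α := {c | ((c :: ·) ⁻¹' A).Nonempty ∧ s ∈ M.reachableFrom (M.step s c)}
    have hR : R.card ≤ 1 := by
      refine Finset.card_le_one.2 fun c hc d hd => ?_
      obtain ⟨⟨wc, hwc⟩, hsc⟩ := (Finset.mem_filter.1 hc).2
      obtain ⟨⟨wd, hwd⟩, hsd⟩ := (Finset.mem_filter.1 hd).2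
      exact M.eq_of_cons_mem_antichain_of_mem_reachableFrom hM hA hanti hwc hwd hsc hsd
    obtain ⟨m, hm⟩ : ∃ m, (M.reachableFrom s).ncard = m + 1 :=
      Nat.exists_eq_add_one.2 ((Set.ncard_pos (Set.toFinite _)).2 ⟨s, M.self_mem_reachableFrom s⟩)
    have hX (c : α) (_ : c ∈ R) : ((c :: ·) ⁻¹' A).ncard ≤ N ^ (m + 1) :=
      (htail c).trans (Nat.pow_le_pow_right (by omega)
        (hm ▸ Set.ncard_le_ncard (M.reachableFrom_step_subset s c)))
    have hY (c : α) (hc : c ∉ R) : ((c :: ·) ⁻¹' A).ncard ≤ N ^ m := by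
      rcases Set.eq_empty_or_nonempty ((c :: ·) ⁻¹' A) with hempty | hne
      · simp [hempty]
      · have hns : s ∉ M.reachableFrom (M.step s c) := fun h => hc (by simp [R, hne, h])
        have hlt : (M.reachableFrom (M.step s c)).ncard < m + 1 := hm ▸
          Set.ncard_lt_ncard ⟨M.reachableFrom_step_subset s c,
            fun h => hns (h (M.self_mem_reachableFrom s))⟩
        exact (htail c).trans (Nat.pow_le_pow_right (by omega) (by omega))
    rw [hm]
    calc A.ncard ≤ ∑ c, ((c :: ·) ⁻¹' A).ncard :=
          ncard_le_sum_ncard_cons_preimage fun h => by simpa using hlen _ h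
      _ ≤ N ^ (m + 1) + K * N ^ m := sum_le_of_card_le_one hR hX hY
      _ = N ^ m * (N + K) := by ring
      _ ≤ (N + K) ^ m * (N + K) := by gcongr; omega
      _ = ((n + 1) * K + 1) ^ (m + 1) := by rw [hN]; ring

theorem polyAntichainGrowth_accepts [Fintype α] [Finite σ] (hM : ¬ M.HasIncomparableLoops) :
    PolyAntichainGrowth (· < ·) (M.accepts : Set (List α)) := fun _ hL hfam =>
  polyGrowth_of_countLen_le fun n =>
    M.ncard_antichain_le hM n [] (fun _ hw => hL hw.1) (hfam n) fun _ hw => hw.2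

theorem exists_antichain_expGrowth (hM : M.HasIncomparableLoops) :
    ∃ L : Set (List α), L ⊆ (M.accepts : Set (List α)) ∧ IsAntichainLang (· < ·) L ∧
      ExpGrowth L := by
  obtain ⟨x, u, v, y, huv, hu, hv, hy⟩ := hM
  have hUV : ¬ LexComp (· < ·) (u ++ v) (v ++ u) := not_lexComp_append huv v u
  have hlenUV : (u ++ v).length = (v ++ u).length := by simp [add_comm]
  obtain ⟨B, hBdef⟩ : ∃ B, (v ++ u).length = B := ⟨_, rfl⟩
  have hB : 0 < B := by
    cases u with
    | nil => exact absurd (.inl (.nil v)) huv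
    | cons => simp [← hBdef]
  let z (l : List Bool) : List α := x ++ (blockWord (u ++ v) (v ++ u) l ++ y)
  have hanti {l l' : List Bool} (hl : l ≠ l') : ¬ LexComp (· < ·) (z l) (z l') := by
    simpa only [z, lexComp_append_left_iff] using not_lexComp_blockWord hUV hl y y
  have hlen (l : List Bool) : (z l).length = (x.length + y.length + B) + 2 * B * l.length := by
    rw [List.length_append, List.length_append, length_blockWord hlenUV, hBdef]
    ring
  have hinj : z.Injective := fun l l' h => by_contra fun hne => hanti hne (h ▸ lexComp_refl _)
  have hcount := countLen_range_of_length_eq hinj (by omega) hlen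
  rw [Fintype.card_bool] at hcount
  refine ⟨Set.range z, ?_, ?_, expGrowth_of_pow_two_le (by omega) fun j => (hcount j).ge⟩
  · rintro _ ⟨l, rfl⟩
    have hloop := M.evalFrom_blockWord (s := M.eval x) (by rw [evalFrom_of_append, hu, hv])
      (by rw [evalFrom_of_append, hv, hu]) l
    show M.evalFrom M.start (x ++ (_ ++ y)) ∈ M.accept
    rw [evalFrom_of_append, evalFrom_of_append]
    exact hloop ▸ hy
  · rintro _ ⟨l, rfl⟩ _ ⟨l', rfl⟩ hne
    exact hanti fun h => hne (h ▸ rfl)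

end DFA

/-- If the language of an NFA over a partially ordered alphabet does not have polynomial
antichain growth, then it contains an antichain with exponential growth (and hence has
exponential antichain growth). -/
theorem nfa_exp_antichain {Sigma Q : Type*} [Fintype Sigma] [Fintype Q]
    [PartialOrder Sigma] (step : Q → Sigma → Set Q) (q0 : Q) (F : Set Q)
    (h : ¬ PolyAntichainGrowth (· < ·) ((NFA.mk step {q0} F).accepts : Set (List Sigma))) :
    (∃ L' : Set (List Sigma), L' ⊆ ((NFA.mk step {q0} F).accepts : Set (List Sigma)) ∧
      IsAntichainLang (· < ·) L' ∧ ExpGrowth L') ∧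
    ExpAntichainGrowth (· < ·) ((NFA.mk step {q0} F).accepts : Set (List Sigma)) := by
  set M := (NFA.mk step {q0} F).toDFA
  rw [← NFA.toDFA_correct] at h ⊢
  have hM : M.HasIncomparableLoops := by_contra fun hM => h (M.polyAntichainGrowth_accepts hM)
  obtain ⟨L, hL, hanti, hexp⟩ := M.exists_antichain_expGrowth hM
  exact ⟨⟨L, hL, hanti, hexp⟩, L, hL, hanti.antichainFamily, hexp⟩
end

section
/- Let Σ be a finite alphabet with a linear order, and let Σ̃ = Σ ∪ {0, 1} (with 0, 1 two fresh letters) be partially ordered by extending the order on Σ so that σ < 0 and σ < 1 for all σ ∈ Σ, and 0 and 1 are incomparable. Then for any languages L1, L2 ⊆ Σ*, the language L1·{0} ∪ L2·{1} ⊆ Σ̃* is a chain (with respect to the lexicographic order induced on Σ̃*) if and only if L1 ∩ L2 = ∅. -/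
open Filter
open scoped ENNReal

/-- The order on `Σ ∪ {0, 1}`, where `Σ` carries its linear order, both fresh letters
(`Sum.inr false` playing `0` and `Sum.inr true` playing `1`) lie above every letter of
`Σ`, and the two fresh letters are incomparable. -/
def extRel01 {Sigma : Type*} [LinearOrder Sigma] : Sigma ⊕ Bool → Sigma ⊕ Bool → Prop :=
  fun x y =>
    match x, y with
    | Sum.inl a, Sum.inl b => a < b
    | Sum.inl _, Sum.inr _ => True
    | _, _ => False

namespace LexR

variable {α : Type*} {r : α → α → Prop}

theorem refl : ∀ w : List α, LexR r w w
  | [] => .nil []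
  | x :: w => .cons x (refl w)

theorem cons_cons_iff {x y : α} {w w' : List α} :
    LexR r (x :: w) (y :: w') ↔ r x y ∨ x = y ∧ LexR r w w' := by
  constructor
  · rintro (_ | ⟨_, _, h⟩ | ⟨_, h⟩)
    · exact .inl h
    · exact .inr ⟨rfl, h⟩
  · rintro (h | ⟨rfl, h⟩)
    · exact .head _ _ h
    · exact .cons _ h

theorem not_append_singleton (hr : ∀ x, ¬ r x x) {a b : α} (hab : ¬ r a b) (hne : a ≠ b) :
    ∀ w : List α, ¬ LexR r (w ++ [a]) (w ++ [b])
  | [] => by simpa [cons_cons_iff] using ⟨hab, fun h => absurd h hne⟩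
  | x :: w => by
    simpa [cons_cons_iff, hr x] using not_append_singleton hr hab hne w

end LexR

section Marked

variable {Sigma : Type*} [LinearOrder Sigma]

/- Distinct words first differ either at two letters of `Sigma`, which the linear order compares,
or where one word has ended, and then its marker lies above the other word's letter. -/
theorem lexComp_map_inl_append_of_ne (b₁ b₂ : Bool) :
    ∀ {u v : List Sigma}, u ≠ v →
      LexComp extRel01 (u.map Sum.inl ++ [Sum.inr b₁]) (v.map Sum.inl ++ [Sum.inr b₂])
  | [], [], h => absurd rfl h
  | [], _ :: _, _ => .inr (.head _ _ trivial)
  | _ :: _, [], _ => .inl (.head _ _ trivial)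
  | a :: u, c :: v, h => by
    rcases lt_trichotomy a c with hac | rfl | hca
    · exact .inl (.head _ _ hac)
    · rcases lexComp_map_inl_append_of_ne b₁ b₂ (u := u) (v := v) (by simpa using h) with h' | h'
      · exact .inl (.cons _ h')
      · exact .inr (.cons _ h')
    · exact .inr (.head _ _ hca)

theorem lexComp_map_inl_append_iff (u v : List Sigma) (b₁ b₂ : Bool) :
    LexComp extRel01 (u.map Sum.inl ++ [Sum.inr b₁]) (v.map Sum.inl ++ [Sum.inr b₂]) ↔
      (u = v → b₁ = b₂) := by
  have hirr : ∀ x : Sigma ⊕ Bool, ¬ extRel01 x x := by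
    rintro (_ | _) <;> simp [extRel01]
  constructor
  · rintro hcomp rfl
    by_contra hb
    have hne : (Sum.inr b₁ : Sigma ⊕ Bool) ≠ Sum.inr b₂ := by simpa using hb
    rcases hcomp with h | h
    · exact LexR.not_append_singleton hirr (by simp [extRel01]) hne _ h
    · exact LexR.not_append_singleton hirr (by simp [extRel01]) hne.symm _ h
  · intro h
    by_cases huv : u = v
    · subst huv
      rw [h rfl]
      exact .inl (LexR.refl _)
    · exact lexComp_map_inl_append_of_ne b₁ b₂ huv

end Marked

theorem chain_iff_intersection_empty_general {Sigma : Type*} [LinearOrder Sigma]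
    (L1 L2 : Set (List Sigma)) :
    IsChainLang extRel01
      ({w | ∃ l ∈ L1, w = l.map Sum.inl ++ [Sum.inr false]} ∪
       {w | ∃ l ∈ L2, w = l.map Sum.inl ++ [Sum.inr true]}) ↔
    L1 ∩ L2 = ∅ := by
  constructor
  · intro hchain
    refine Set.eq_empty_of_forall_notMem fun l ⟨h₁, h₂⟩ => ?_
    have hcomp := hchain _ (.inl ⟨l, h₁, rfl⟩) _ (.inr ⟨l, h₂, rfl⟩)
    exact Bool.false_ne_true ((lexComp_map_inl_append_iff _ _ _ _).1 hcomp rfl)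
  · intro h
    have hdisj : ∀ l ∈ L1, l ∉ L2 := Set.disjoint_left.1 (Set.disjoint_iff_inter_eq_empty.2 h)
    rintro _ (⟨u, hu, rfl⟩ | ⟨u, hu, rfl⟩) _ (⟨v, hv, rfl⟩ | ⟨v, hv, rfl⟩) <;>
      refine (lexComp_map_inl_append_iff _ _ _ _).2 ?_
    · exact fun _ => rfl
    · rintro rfl
      exact absurd hv (hdisj u hu)
    · rintro rfl
      exact absurd hu (hdisj u hv)
    · exact fun _ => rfl

/-- `L1·{0} ∪ L2·{1}` is a chain iff `L1 ∩ L2 = ∅`. -/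
theorem chain_iff_intersection_empty {Sigma : Type*} [Fintype Sigma] [LinearOrder Sigma]
    (L1 L2 : Set (List Sigma)) :
    IsChainLang extRel01
      ({w | ∃ l ∈ L1, w = l.map Sum.inl ++ [Sum.inr false]} ∪
       {w | ∃ l ∈ L2, w = l.map Sum.inl ++ [Sum.inr true]}) ↔
    L1 ∩ L2 = ∅ :=
  chain_iff_intersection_empty_general L1 L2
end

section
/- Let L ⊆ Σ* be a prefix-free chain (that is, a chain in which no word is a proper prefix of another word of L). Then the Kleene star L* is a chain. -/
open Filter
open scoped ENNReal

/-!
Compare two factorizations `u₁ ⋯ uₘ` and `v₁ ⋯ vₙ` over `L` factor by factor. Equal leading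
factors can be cancelled, since prepending a common word preserves the order. At the first pair
of distinct factors `u ≠ v`, the two words are comparable because `L` is a chain, and since `L`
is prefix-free neither is a prefix of the other, so their comparison is decided at a pair of letters
`x < y` and survives whatever is appended to `u` and `v`.
-/

namespace LexR

variable {α : Type*} {r : α → α → Prop}

theorem append_left (u : List α) {w w' : List α} (h : LexR r w w') :
    LexR r (u ++ w) (u ++ w') := by
  induction u with
  | nil => exact h
  | cons x u ih => exact .cons x ih

theorem append_of_not_prefix {u v : List α} (h : LexR r u v) (hnp : ¬u <+: v)
    (w w' : List α) : LexR r (u ++ w) (v ++ w') := by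
  induction h with
  | nil => exact absurd List.nil_prefix hnp
  | head _ _ hxy => exact .head _ _ hxy
  | cons x _ ih => exact .cons x (ih fun hp => hnp (List.cons_prefix_cons.mpr ⟨rfl, hp⟩))

end LexR

namespace LexComp

variable {α : Type*} {r : α → α → Prop}

theorem append_left (u : List α) {w w' : List α} (h : LexComp r w w') :
    LexComp r (u ++ w) (u ++ w') :=
  h.imp (LexR.append_left u) (LexR.append_left u)

theorem append_of_not_prefix {u v : List α} (h : LexComp r u v) (huv : ¬u <+: v)
    (hvu : ¬v <+: u) (w w' : List α) : LexComp r (u ++ w) (v ++ w') :=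
  h.imp (·.append_of_not_prefix huv w w') (·.append_of_not_prefix hvu w' w)

end LexComp

theorem lexComp_flatten_of_prefix_free_chain {α : Type*} {r : α → α → Prop} {L : Set (List α)}
    (hchain : IsChainLang r L) (hpf : ∀ u ∈ L, ∀ v ∈ L, u <+: v → u = v) :
    ∀ {S T : List (List α)}, (∀ u ∈ S, u ∈ L) → (∀ v ∈ T, v ∈ L) →
      LexComp r S.flatten T.flatten
  | [], _, _, _ => .inl (.nil _)
  | _ :: _, [], _, _ => .inr (.nil _)
  | u :: S, v :: T, hS, hT => by
    have hu : u ∈ L := hS u List.mem_cons_self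
    have hv : v ∈ L := hT v List.mem_cons_self
    rw [List.flatten_cons, List.flatten_cons]
    by_cases huv : u = v
    · subst huv
      exact (lexComp_flatten_of_prefix_free_chain hchain hpf (fun x hx => hS x (List.mem_cons_of_mem u hx))
        (fun x hx => hT x (List.mem_cons_of_mem u hx))).append_left u
    · exact (hchain u hu v hv).append_of_not_prefix (fun h => huv (hpf u hu v hv h))
        (fun h => huv (hpf v hv u hu h).symm) _ _

theorem prefix_free_chain_kstar_general {Sigma : Type*} [PartialOrder Sigma]
    (L : Set (List Sigma)) (hchain : IsChainLang (· < ·) L)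
    (hpf : ∀ u ∈ L, ∀ v ∈ L, u <+: v → u = v) :
    IsChainLang (· < ·) (KStarLang L) := by
  rintro _ ⟨S, hS, rfl⟩ _ ⟨T, hT, rfl⟩
  exact lexComp_flatten_of_prefix_free_chain hchain hpf hS hT

/-- The Kleene star of a prefix-free chain is a chain. -/
theorem prefix_free_chain_kstar {Sigma : Type*} [Fintype Sigma] [PartialOrder Sigma]
    (L : Set (List Sigma)) (hchain : IsChainLang (· < ·) L)
    (hpf : ∀ u ∈ L, ∀ v ∈ L, u <+: v → u = v) :
    IsChainLang (· < ·) (KStarLang L) :=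
  prefix_free_chain_kstar_general L hchain hpf
end
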